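/- For 0 < α < 1 and integers n > l, the telescoping expansion ∑_{m=n}^∞ (Λ^{-α}(m−n) − Λ^{-α}(m−l)) = ∑_{k=0}^{n-l-1} (n−l−k) Λ^{-(α-1)}(k) holds, and this equals ∑_{m=l}^{n-1} Λ^{-α}(m−l). -/

import Mathlib

/-!
Since `Λ^{-α}(j+1) − Λ^{-α}(j) = Λ^{-(α-1)}(j+1)`, the kernel `Λ^{-α}` is the sequence of partial sums
of `Λ^{-(α-1)}`, and summing partial sums gives the weights `d − k`. For `0 < α < 1` the kernel is
positive and decreasing, and `Λ^{-α}(m) = ∏_{i<m} (1 − (1−α)/(i+1)) ≤ exp(−(1−α) H_m) → 0`, so the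
shifted differences `Λ^{-α}(j) − Λ^{-α}(j+d)` are nonnegative and telescope to `∑_{k<d} Λ^{-α}(k)`.
-/

open scoped BigOperators

/-- `Lam α m` is the kernel `Λ^{-α}(m) = α(α+1)⋯(α+m-1)/m!`, with `Lam α 0 = 1`. -/
noncomputable def Lam (α : ℝ) (m : ℕ) : ℝ :=
  (∏ i ∈ Finset.range m, (α + i)) / (Nat.factorial m)

open Filter Finset Topology

theorem sum_range_mul_sub_eq_sum_range_partialSums (g : ℕ → ℝ) (d : ℕ) :
    ∑ k ∈ range d, ((d : ℝ) - k) * g k = ∑ m ∈ range d, ∑ k ∈ range (m + 1), g k := by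
  induction d with
  | zero => simp
  | succ d ih =>
    have drop_last :
        ∑ k ∈ range (d + 1), ((d : ℝ) - k) * g k = ∑ k ∈ range d, ((d : ℝ) - k) * g k := by
      simp [sum_range_succ]
    rw [sum_range_succ (fun m => ∑ k ∈ range (m + 1), g k) d, ← ih, ← drop_last, ← sum_add_distrib]
    refine sum_congr rfl fun k _ => ?_
    push_cast
    ring

theorem hasSum_sub_shift_of_antitone {f : ℕ → ℝ} (hf : Antitone f)
    (hlim : Tendsto f atTop (𝓝 0)) (d : ℕ) :
    HasSum (fun j => f j - f (j + d)) (∑ k ∈ range d, f k) := by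
  have partial_sum (N : ℕ) :
      ∑ j ∈ range N, (f j - f (j + d)) = ∑ k ∈ range d, f k - ∑ t ∈ range d, f (N + t) := by
    have h₁ := sum_range_add f N d
    have h₂ := sum_range_add f d N
    have shifted : ∑ j ∈ range N, f (j + d) = ∑ j ∈ range N, f (d + j) :=
      sum_congr rfl fun j _ => by rw [add_comm]
    rw [add_comm d N] at h₂
    rw [sum_sub_distrib, shifted]
    linarith
  have tail : Tendsto (fun N => ∑ t ∈ range d, f (N + t)) atTop (𝓝 0) := by
    simpa using tendsto_finsetSum (range d) fun t _ => hlim.comp (tendsto_add_atTop_nat t)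
  rw [hasSum_iff_tendsto_nat_of_nonneg (fun j => sub_nonneg.2 (hf (Nat.le_add_right j d)))]
  simpa [partial_sum] using tendsto_const_nhds.sub tail

theorem Lam_eq_prod (α : ℝ) (m : ℕ) : Lam α m = ∏ i ∈ range m, (α + i) / (i + 1) := by
  rw [Lam, prod_div_distrib, ← prod_range_add_one_eq_factorial]
  push_cast
  rfl

theorem Lam_succ (α : ℝ) (m : ℕ) : Lam α (m + 1) = Lam α m * ((α + m) / (m + 1)) := by
  simp only [Lam_eq_prod, prod_range_succ]

theorem Lam_succ_sub (α : ℝ) (m : ℕ) : Lam α (m + 1) - Lam α m = Lam (α - 1) (m + 1) := by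
  have shift : ∏ i ∈ range (m + 1), (α - 1 + i) = (∏ i ∈ range m, (α + i)) * (α - 1) := by
    rw [prod_range_succ', Nat.cast_zero, add_zero]
    exact congrArg (· * (α - 1)) (prod_congr rfl fun i _ => by push_cast; ring)
  rw [Lam, Lam, Lam, shift, prod_range_succ, Nat.factorial_succ]
  have : (m.factorial : ℝ) ≠ 0 := by positivity
  push_cast
  field_simp
  ring

theorem Lam_eq_sum_range_Lam_sub_one (α : ℝ) (m : ℕ) :
    Lam α m = ∑ k ∈ range (m + 1), Lam (α - 1) k := by
  induction m with
  | zero => simp [Lam]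
  | succ m ih => rw [sum_range_succ, ← ih, ← Lam_succ_sub, add_sub_cancel]

theorem Lam_nonneg {α : ℝ} (hα : 0 ≤ α) (m : ℕ) : 0 ≤ Lam α m := by
  rw [Lam_eq_prod]
  exact prod_nonneg fun i _ => by positivity

theorem Lam_antitone {α : ℝ} (h0 : 0 ≤ α) (h1 : α ≤ 1) : Antitone (Lam α) := by
  refine antitone_nat_of_succ_le fun m => ?_
  rw [Lam_succ]
  refine mul_le_of_le_one_right (Lam_nonneg h0 m) ?_
  rw [div_le_one (by positivity)]
  linarith

theorem Lam_le_exp_neg_harmonic {α : ℝ} (hα : 0 ≤ α) (m : ℕ) :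
    Lam α m ≤ Real.exp ((α - 1) * ∑ i ∈ range m, 1 / ((i : ℝ) + 1)) := by
  rw [Lam_eq_prod, mul_sum, Real.exp_sum]
  refine prod_le_prod (fun i _ => by positivity) fun i _ => ?_
  calc (α + i) / (i + 1) = (α - 1) * (1 / (i + 1)) + 1 := by field_simp; ring
    _ ≤ Real.exp ((α - 1) * (1 / (i + 1))) := Real.add_one_le_exp _

theorem Lam_tendsto_zero {α : ℝ} (h0 : 0 ≤ α) (h1 : α < 1) : Tendsto (Lam α) atTop (𝓝 0) := by
  have bound : Tendsto (fun m : ℕ => Real.exp ((α - 1) * ∑ i ∈ range m, 1 / ((i : ℝ) + 1)))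
      atTop (𝓝 0) :=
    Real.tendsto_exp_atBot.comp <|
      Real.tendsto_sum_range_one_div_nat_succ_atTop.const_mul_atTop_of_neg (by linarith)
  exact squeeze_zero (Lam_nonneg h0) (Lam_le_exp_neg_harmonic h0) bound

theorem lam_telescoping_expansion_general (α : ℝ) (h0 : 0 < α) (h1 : α < 1) (d : ℕ) :
    HasSum (fun j : ℕ => Lam α j - Lam α (j + d))
        (∑ k ∈ Finset.range d, ((d : ℝ) - k) * Lam (α - 1) k) ∧
      ∑ k ∈ Finset.range d, ((d : ℝ) - k) * Lam (α - 1) k = ∑ k ∈ Finset.range d, Lam α k := by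
  have weights : ∑ k ∈ range d, ((d : ℝ) - k) * Lam (α - 1) k = ∑ k ∈ range d, Lam α k := by
    rw [sum_range_mul_sub_eq_sum_range_partialSums]
    exact sum_congr rfl fun m _ => (Lam_eq_sum_range_Lam_sub_one α m).symm
  rw [weights]
  exact ⟨hasSum_sub_shift_of_antitone (Lam_antitone h0.le h1.le) (Lam_tendsto_zero h0.le h1) d,
    rfl⟩

/-- Telescoping expansion: for `0 < α < 1` and `d = n − l ≥ 1`,
`∑_{j=0}^∞ (Λ^{-α}(j) − Λ^{-α}(j+d)) = ∑_{k=0}^{d-1} (d−k) Λ^{-(α-1)}(k)`,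
and this equals `∑_{k=0}^{d-1} Λ^{-α}(k)`. -/
theorem lam_telescoping_expansion (α : ℝ) (h0 : 0 < α) (h1 : α < 1) (d : ℕ) (hd : 1 ≤ d) :
    HasSum (fun j : ℕ => Lam α j - Lam α (j + d))
        (∑ k ∈ Finset.range d, ((d : ℝ) - k) * Lam (α - 1) k) ∧
      ∑ k ∈ Finset.range d, ((d : ℝ) - k) * Lam (α - 1) k = ∑ k ∈ Finset.range d, Lam α k :=
  lam_telescoping_expansion_general α h0 h1 d
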